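/- Let x be a non-dirty candidate with respect to threshold 5/6 in an election with at most 6 candidates. Let r be a 3-wise median of the election such that every candidate z with z ≥_{5/6} x is ranked before x in r. Then for every candidate y ≠ x with x ≥_{5/6} y, x is ranked before y in r. -/

import Mathlib

open Finset

/-- A ranking (strict total order) of the finite candidate set `C`, encoded as a
bijection with `Fin (Fintype.card C)`; position `0` is the top of the ranking. -/
abbrev Ranking (C : Type*) [Fintype C] := C ≃ Fin (Fintype.card C)

section Defs

variable {C : Type*} [Fintype C] [DecidableEq C]

/-- `x` is ranked (strictly) before `y` in the ranking `π`. -/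
def Before (π : Ranking C) (x y : C) : Prop := π x < π y

instance (π : Ranking C) (x y : C) : Decidable (Before π x y) :=
  inferInstanceAs (Decidable (π x < π y))

instance : DecidableEq (Ranking C) := fun a b =>
  decidable_of_iff (∀ i, a i = b i) Equiv.ext_iff.symm

/-- The top-ranked element of `S ⊆ C` according to `π` (`⊤` if `S = ∅`). -/
def topS (π : Ranking C) (S : Finset C) : WithTop C :=
  (S.image π).min.map (fun i => π.symm i)

/-- The `k`-wise Kendall-tau distance between two rankings: the number of subsets
`S ⊆ C` with `|S| ≤ k` on whose top element the two rankings disagree (subsets of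
size at most one never contribute). -/
def kDist (k : ℕ) (π σ : Ranking C) : ℕ :=
  ((Finset.univ : Finset C).powerset.filter
    (fun S => S.card ≤ k ∧ topS π S ≠ topS σ S)).card

/-- The `k`-wise Kendall-tau distance from a ranking to a voting profile. -/
def kDistV (k : ℕ) (π : Ranking C) (V : Multiset (Ranking C)) : ℕ :=
  (V.map (fun σ => kDist k π σ)).sum

/-- `π` is a `k`-wise median (for `k = 2`: a Kemeny ranking) of the profile `V`. -/
def IsKMedian (k : ℕ) (V : Multiset (Ranking C)) (π : Ranking C) : Prop :=
  ∀ σ : Ranking C, kDistV k π V ≤ kDistV k σ V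

/-- The number of votes of `V` in which `x` is ranked before `y`. -/
def votesBefore (V : Multiset (Ranking C)) (x y : C) : ℕ :=
  Multiset.card (V.filter (fun v => Before v x y))

/-- `x ≥ₛ y` : `x` is ranked before `y` in at least `s·|V|` of the votes. -/
def AtLeastRatio (V : Multiset (Ranking C)) (s : ℝ) (x y : C) : Prop :=
  s * (Multiset.card V : ℝ) ≤ (votesBefore V x y : ℝ)

/-- `x >ₛ y` : `x` is ranked before `y` in more than `s·|V|` of the votes. -/
def MoreThanRatio (V : Multiset (Ranking C)) (s : ℝ) (x y : C) : Prop :=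
  s * (Multiset.card V : ℝ) < (votesBefore V x y : ℝ)

noncomputable instance (V : Multiset (Ranking C)) (s : ℝ) (x y : C) :
    Decidable (AtLeastRatio V s x y) :=
  inferInstanceAs (Decidable (s * (Multiset.card V : ℝ) ≤ (votesBefore V x y : ℝ)))

/-- `x` is a non-dirty candidate w.r.t. threshold `s`. -/
def NonDirty (V : Multiset (Ranking C)) (s : ℝ) (x : C) : Prop :=
  ∀ y : C, y ≠ x → AtLeastRatio V s x y ∨ AtLeastRatio V s y x

/-- `x` is ranked first (is the winner) in the ranking `π`. -/
def RankedFirst (π : Ranking C) (x : C) : Prop :=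
  ∀ y : C, y ≠ x → Before π x y

instance (π : Ranking C) (x : C) : Decidable (RankedFirst π x) :=
  inferInstanceAs (Decidable (∀ y : C, y ≠ x → Before π x y))

end Defs

/-!
Suppose some `y` with `x ≥_{5/6} y` precedes `x` in `r`, and take the last such `y`. Every
candidate strictly between `y` and `x` then beats `x` with ratio `5/6` (by maximality of `y` and
non-dirtiness of `x`), and `x` beats every candidate after it (by the hypothesis on `r`). Move `y`
to just behind `x`: only sets `{y} ∪ T` with `T` after `y` in `r` change their top. Counting
votes, in units of `|V| / 6`, the move gains at least `4` on `{y, x}`, at least `3` on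
`{y, c}` and `{y, x, c}` together, and loses at most `2` on each `{y, a, b}` with `x ∉ {a, b}`.
With `m ≤ |C| - 2 ≤ 4` candidates after `y` besides `x`, the net gain `4 + 3m - m(m - 1)` is
positive, contradicting the minimality of `r`.
-/

theorem card_filter_le_sum_card_filter {α ι : Type*} (V : Multiset α) {P : α → Prop}
    [DecidablePred P] {Q : ι → α → Prop} [∀ i, DecidablePred (Q i)] (s : Finset ι)
    (h : ∀ v, P v → ∃ i ∈ s, Q i v) :
    Multiset.card (V.filter P) ≤ ∑ i ∈ s, Multiset.card (V.filter (Q i)) := by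
  simp only [← Multiset.countP_eq_card_filter]
  induction V using Multiset.induction_on with
  | empty => simp
  | cons v V ih =>
    simp only [Multiset.countP_cons, sum_add_distrib]
    gcongr
    split_ifs with hP
    · obtain ⟨i, hi, hQ⟩ := h v hP
      calc 1 = (if Q i v then 1 else 0) := (if_pos hQ).symm
        _ ≤ _ := single_le_sum (f := fun i => if Q i v then 1 else 0)
            (fun _ _ => Nat.zero_le _) hi
    · exact Nat.zero_le _

section Votes

variable {C : Type*} [Fintype C]

theorem before_or_before (π : Ranking C) {a b : C} (hab : a ≠ b) :
    Before π a b ∨ Before π b a :=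
  lt_or_gt_of_ne (π.injective.ne hab)

theorem not_before_iff (π : Ranking C) {a b : C} (hab : a ≠ b) :
    ¬ Before π a b ↔ Before π b a :=
  ⟨(before_or_before π hab).resolve_left, fun h h' => lt_asymm h h'⟩

variable (V : Multiset (Ranking C))

theorem votesBefore_add_votesBefore {a b : C} (hab : a ≠ b) :
    votesBefore V a b + votesBefore V b a = Multiset.card V := by
  rw [votesBefore, votesBefore, ← Multiset.filter_congr (fun v _ => not_before_iff v hab),
    ← Multiset.card_add, Multiset.filter_add_not]

theorem votesBefore_le_add (a b c : C) :
    votesBefore V a c ≤ votesBefore V a b + votesBefore V b c := by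
  refine card_filter_le_sum_card_filter V (Q := fun i v => Before v (![a, b] i) (![b, c] i))
    univ (fun v hac => ?_) |>.trans_eq (by simp [votesBefore, Fin.sum_univ_two]; rfl)
  by_cases hab : Before v a b
  · exact ⟨0, mem_univ _, hab⟩
  · exact ⟨1, mem_univ _, lt_of_le_of_lt (not_lt.mp hab) hac⟩

theorem six_mul_votesBefore_le {a b : C} (hab : a ≠ b) (h : AtLeastRatio V (5 / 6) a b) :
    6 * votesBefore V b a ≤ Multiset.card V := by
  have hsum := votesBefore_add_votesBefore V hab
  unfold AtLeastRatio at h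
  have : (6 * votesBefore V b a : ℝ) ≤ Multiset.card V := by
    rw [← hsum] at h ⊢; push_cast at h ⊢; linarith
  exact_mod_cast this

end Votes

section TopS

variable {C : Type*} [Fintype C]

theorem topS_eq_coe_iff (π : Ranking C) {S : Finset C} {a : C} :
    topS π S = ↑a ↔ a ∈ S ∧ ∀ b ∈ S, π a ≤ π b := by
  have hmap : topS π S = ↑a ↔ (S.image π).min = ↑(π a) := by
    rw [topS, ← π.symm_apply_apply a, ← WithTop.map_coe, π.symm_apply_apply]
    exact (Option.map_injective π.symm.injective).eq_iff
  rw [hmap]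
  constructor
  · intro h
    refine ⟨?_, fun b hb =>
      WithTop.coe_le_coe.mp (h ▸ Finset.min_le (mem_image_of_mem π hb))⟩
    obtain ⟨b, hb, hba⟩ := mem_image.mp (mem_of_min h)
    rwa [← π.injective hba]
  · rintro ⟨ha, hmin⟩
    refine le_antisymm (Finset.min_le (mem_image_of_mem π ha)) (Finset.le_min_iff.mpr ?_)
    simp only [mem_image, forall_exists_index, and_imp]
    rintro _ b hb rfl
    exact WithTop.coe_le_coe.mpr (hmin b hb)

theorem topS_eq_coe_iff_before (π : Ranking C) {S : Finset C} {a : C} :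
    topS π S = ↑a ↔ a ∈ S ∧ ∀ b ∈ S, b ≠ a → Before π a b := by
  rw [topS_eq_coe_iff]
  refine and_congr_right fun _ => forall₂_congr fun b _ => ?_
  refine ⟨fun h hba => lt_of_le_of_ne h (π.injective.ne hba.symm), fun h => ?_⟩
  rcases eq_or_ne b a with rfl | hba
  exacts [le_rfl, (h hba).le]

theorem exists_topS_eq (π : Ranking C) {S : Finset C} (hS : S.Nonempty) :
    ∃ a : C, topS π S = ↑a := by
  obtain ⟨a, ha, hmin⟩ := S.exists_min_image π hS
  exact ⟨a, (topS_eq_coe_iff π).mpr ⟨ha, hmin⟩⟩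

theorem topS_singleton (π : Ranking C) (a : C) : topS π {a} = ↑a :=
  (topS_eq_coe_iff π).mpr ⟨mem_singleton_self a, by simp⟩

end TopS

section Disagreements

variable {C : Type*} [Fintype C] [DecidableEq C] (V : Multiset (Ranking C))

def disagreements (π : Ranking C) (S : Finset C) : ℕ :=
  Multiset.card (V.filter fun v => topS π S ≠ topS v S)

theorem kDistV_eq_sum (k : ℕ) (π : Ranking C) :
    kDistV k π V = ∑ S ∈ univ.powerset, if S.card ≤ k then disagreements V π S else 0 := by
  induction V using Multiset.induction_on with
  | empty => simp [kDistV, disagreements]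
  | cons σ V ih =>
    rw [kDistV, Multiset.map_cons, Multiset.sum_cons, ← kDistV, ih, kDist, card_filter,
      ← sum_add_distrib]
    refine sum_congr rfl fun S _ => ?_
    by_cases hk : S.card ≤ k <;> by_cases hσ : topS π S ≠ topS σ S <;>
      simp [hk, hσ, disagreements, add_comm]

theorem disagreements_le_card (π : Ranking C) (S : Finset C) :
    disagreements V π S ≤ Multiset.card V :=
  Multiset.card_le_card (Multiset.filter_le _ _)

theorem card_le_disagreements_add_votesBefore {π : Ranking C} {S : Finset C} {a t : C}
    (ha : topS π S = ↑a) (ht : t ∈ S) (hat : a ≠ t) :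
    Multiset.card V ≤ disagreements V π S + votesBefore V a t := by
  conv_lhs => rw [← Multiset.filter_add_not (fun v => topS π S ≠ topS v S) V]
  rw [Multiset.card_add, disagreements, votesBefore]
  refine Nat.add_le_add_left (Multiset.card_le_card (Multiset.monotone_filter_right V ?_)) _
  intro v hv
  rw [not_not, ha, eq_comm, topS_eq_coe_iff_before] at hv
  exact hv.2 t ht hat.symm

theorem disagreements_le_sum_votesBefore {π : Ranking C} {S R : Finset C} {t : C}
    (ht : topS π S = ↑t) (hR : ∀ s ∈ S, s ≠ t → s ∈ R) :
    disagreements V π S ≤ ∑ s ∈ R, votesBefore V s t := by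
  have htS := ((topS_eq_coe_iff π).mp ht).1
  refine card_filter_le_sum_card_filter V R fun v hv => ?_
  obtain ⟨s, hs⟩ := exists_topS_eq v ⟨t, htS⟩
  rw [ht, hs, ne_eq, WithTop.coe_inj] at hv
  obtain ⟨hsS, hbefore⟩ := (topS_eq_coe_iff_before v).mp hs
  exact ⟨s, hR s hsS (Ne.symm hv), hbefore t htS hv⟩

end Disagreements

section Gain

variable {C : Type*} [Fintype C] [DecidableEq C] (k : ℕ) (V : Multiset (Ranking C))

def gain (π π' : Ranking C) (S : Finset C) : ℤ :=
  if S.card ≤ k then (disagreements V π S : ℤ) - disagreements V π' S else 0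

theorem kDistV_sub_kDistV_eq_sum_gain (π π' : Ranking C) :
    (kDistV k π V : ℤ) - kDistV k π' V = ∑ S ∈ univ.powerset, gain k V π π' S := by
  rw [kDistV_eq_sum, kDistV_eq_sum]
  push_cast
  rw [← sum_sub_distrib]
  refine sum_congr rfl fun S _ => ?_
  unfold gain
  split_ifs <;> simp

variable {k V} {π π' : Ranking C} {S : Finset C}

theorem gain_eq_zero_of_topS_eq (h : topS π' S = topS π S) : gain k V π π' S = 0 := by
  simp [gain, disagreements, h]

theorem gain_eq_zero_of_lt_card (h : k < S.card) : gain k V π π' S = 0 := by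
  simp [gain, not_le.mpr h]

theorem neg_votesBefore_le_gain {a t : C} (hk : S.card ≤ k) (ha : topS π S = ↑a) (ht : t ∈ S)
    (hat : a ≠ t) : -(votesBefore V a t : ℤ) ≤ gain k V π π' S := by
  have h1 := card_le_disagreements_add_votesBefore V ha ht hat
  have h2 := disagreements_le_card V π' S
  rw [gain, if_pos hk]
  omega

theorem card_le_gain_add {a t : C} {R : Finset C} (hk : S.card ≤ k) (ha : topS π S = ↑a)
    (ht : topS π' S = ↑t) (hat : a ≠ t) (hR : ∀ s ∈ S, s ≠ t → s ∈ R) :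
    (Multiset.card V : ℤ) ≤
      gain k V π π' S + votesBefore V a t + ∑ s ∈ R, votesBefore V s t := by
  have h1 := card_le_disagreements_add_votesBefore V ha ((topS_eq_coe_iff π').mp ht).1 hat
  have h2 := disagreements_le_sum_votesBefore V ht hR
  rw [gain, if_pos hk]
  omega

end Gain

theorem Fin.val_cycleIcc_of_ne {n : ℕ} [NeZero n] {i j k : Fin n} (hk : k ≠ j) :
    (Fin.cycleIcc i j k : ℕ) = if i ≤ k ∧ k < j then (k : ℕ) + 1 else k := by
  by_cases hki : k < i
  · rw [Fin.cycleIcc_of_lt hki, if_neg fun h => absurd h.1 (not_le.mpr hki)]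
  by_cases hjk : j < k
  · rw [Fin.cycleIcc_of_gt hjk, if_neg fun h => absurd h.2 (lt_asymm hjk)]
  have hkj : k < j := lt_of_le_of_ne (not_lt.mp hjk) hk
  rw [Fin.cycleIcc_of_ge_of_lt (not_lt.mp hki) hkj, if_pos ⟨not_lt.mp hki, hkj⟩,
    Fin.val_add_one_of_lt' (by omega)]

section MoveBehind

variable {C : Type*} [Fintype C]

/-- For `r y < r x`: the ranking `r` with `y` moved to just behind `x`, the candidates between
them moving up one place. -/
def moveBehind (r : Ranking C) (y x : C) : Ranking C :=
  r.trans (Fin.cycleIcc (r y) (r x)).symm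

variable {r : Ranking C} {y x : C}

theorem moveBehind_apply_self (hyx : r y < r x) : moveBehind r y x y = r x := by
  have : Nonempty C := ⟨y⟩
  have : NeZero (Fintype.card C) := ⟨Fintype.card_ne_zero⟩
  simp [moveBehind, Equiv.symm_apply_eq, Fin.cycleIcc_of_last hyx.le]

theorem moveBehind_apply_ne (hyx : r y < r x) {c : C} (hc : c ≠ y) :
    moveBehind r y x c ≠ r x := by
  rw [← moveBehind_apply_self hyx]
  exact (moveBehind r y x).injective.ne hc

theorem val_eq_val_moveBehind (hyx : r y < r x) {c : C} (hc : c ≠ y) :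
    (r c : ℕ) = if r y ≤ moveBehind r y x c ∧ moveBehind r y x c < r x then
      (moveBehind r y x c : ℕ) + 1 else moveBehind r y x c := by
  have : Nonempty C := ⟨y⟩
  have : NeZero (Fintype.card C) := ⟨Fintype.card_ne_zero⟩
  rw [← Fin.val_cycleIcc_of_ne (moveBehind_apply_ne hyx hc)]
  simp [moveBehind]

theorem moveBehind_before_iff (hyx : r y < r x) {c d : C} (hc : c ≠ y) (hd : d ≠ y) :
    Before (moveBehind r y x) c d ↔ Before r c d := by
  have hc' := val_eq_val_moveBehind hyx hc
  have hd' := val_eq_val_moveBehind hyx hd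
  have hc'' := Fin.val_ne_of_ne (moveBehind_apply_ne hyx hc)
  have hd'' := Fin.val_ne_of_ne (moveBehind_apply_ne hyx hd)
  simp only [Before, Fin.lt_def, Fin.le_def] at hc' hd' ⊢
  split_ifs at hc' hd' <;> omega

theorem moveBehind_before_self_iff (hyx : r y < r x) {c : C} (hc : c ≠ y) :
    Before (moveBehind r y x) c y ↔ r c ≤ r x := by
  have hc' := val_eq_val_moveBehind hyx hc
  have hc'' := Fin.val_ne_of_ne (moveBehind_apply_ne hyx hc)
  rw [Before, moveBehind_apply_self hyx]
  simp only [Fin.lt_def, Fin.le_def] at hc' ⊢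
  split_ifs at hc' <;> omega

theorem moveBehind_self_before_iff (hyx : r y < r x) {c : C} (hc : c ≠ y) :
    Before (moveBehind r y x) y c ↔ r x < r c := by
  rw [← not_before_iff _ hc, moveBehind_before_self_iff hyx hc, not_le]

end MoveBehind

section MoveBehindTop

variable {C : Type*} [Fintype C] {r : Ranking C} {y x : C} {S : Finset C}

theorem topS_moveBehind_of_ne (hyx : r y < r x) {t : C} (ht : topS r S = ↑t) (hty : t ≠ y) :
    topS (moveBehind r y x) S = ↑t := by
  rw [topS_eq_coe_iff_before] at ht ⊢
  refine ⟨ht.1, fun b hb hbt => ?_⟩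
  rcases eq_or_ne b y with rfl | hby
  · exact (moveBehind_before_self_iff hyx hty).mpr ((ht.2 b hb hbt).le.trans hyx.le)
  · exact (moveBehind_before_iff hyx hty hby).mpr (ht.2 b hb hbt)

theorem exists_of_topS_moveBehind_ne (hyx : r y < r x)
    (h : topS (moveBehind r y x) S ≠ topS r S) :
    topS r S = ↑y ∧
      ∃ t : C, topS (moveBehind r y x) S = ↑t ∧ t ≠ y ∧ r y < r t ∧ r t ≤ r x := by
  obtain ⟨a, ha⟩ := exists_topS_eq r (S := S) (nonempty_iff_ne_empty.mpr
    (by rintro rfl; exact h rfl))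
  obtain rfl : y = a := by
    by_contra hay
    exact h ((topS_moveBehind_of_ne hyx ha (Ne.symm hay)).trans ha.symm)
  obtain ⟨t, ht⟩ := exists_topS_eq (moveBehind r y x) ⟨y, ((topS_eq_coe_iff r).mp ha).1⟩
  have hty : t ≠ y := by rintro rfl; exact h (ht.trans ha.symm)
  refine ⟨ha, t, ht, hty, ?_⟩
  rw [topS_eq_coe_iff_before] at ha ht
  exact ⟨ha.2 t ht.1 hty, (moveBehind_before_self_iff hyx hty).mp (ht.2 y ha.1 hty.symm)⟩

end MoveBehindTop

theorem Finset.sum_powerset_univ_eq_sum_insert {α M : Type*} [Fintype α] [DecidableEq α]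
    [AddCommMonoid M] {f : Finset α → M} {U : Finset α} {a : α} (ha : a ∉ U)
    (hf : ∀ S, f S ≠ 0 → a ∈ S ∧ S ⊆ insert a U) :
    ∑ S ∈ univ.powerset, f S = ∑ T ∈ U.powerset, f (insert a T) := by
  rw [← sum_subset (powerset_mono.mpr (subset_univ (insert a U))), sum_powerset_insert ha,
    sum_eq_zero, zero_add]
  · intro T hT
    by_contra hfT
    exact ha (mem_powerset.mp hT (hf T hfT).1)
  · intro S _ hS
    by_contra hfS
    exact hS (mem_powerset.mpr (hf S hfS).2)

/-- Lower bound, in units of `|V| / 6`, for the gain of `moveBehind r y x` over `r` on the two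
sets `{y} ∪ T` and `{y, x} ∪ T` together, where `|T| = j`. -/
def gainWeight : ℕ → ℤ
  | 0 => 4
  | 1 => 3
  | 2 => -2
  | _ => 0

theorem sum_powerset_gainWeight_pos {β : Type*} (E : Finset β) (hE : E.card ≤ 4) :
    0 < ∑ T ∈ E.powerset, gainWeight T.card := by
  rw [sum_powerset_apply_card]
  generalize E.card = m at hE ⊢
  interval_cases m <;> decide

def behindExcept {C : Type*} [Fintype C] [DecidableEq C] (r : Ranking C) (y x : C) : Finset C :=
  univ.filter fun c => r y < r c ∧ c ≠ x

section Improvement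

variable {C : Type*} [Fintype C] [DecidableEq C] {V : Multiset (Ranking C)} {r : Ranking C}
  {y x : C}

theorem four_mul_card_le_gain_pair (hyx : r y < r x)
    (hy : 6 * votesBefore V y x ≤ Multiset.card V) :
    4 * (Multiset.card V : ℤ) ≤ 6 * gain 3 V r (moveBehind r y x) {y, x} := by
  have hxy : x ≠ y := ne_of_apply_ne r hyx.ne'
  have htop : topS r {y, x} = ↑y := by simp [topS_eq_coe_iff_before, hyx, Before]
  have htop' : topS (moveBehind r y x) {y, x} = ↑x := by
    simp [topS_eq_coe_iff_before, moveBehind_before_self_iff hyx hxy]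
  have := card_le_gain_add (k := 3) (V := V) (R := {y}) (card_le_two.trans (by norm_num)) htop
    htop' hxy.symm (by simp +contextual)
  rw [sum_singleton] at this
  omega

theorem three_mul_card_le_gain_add_gain (hyx : r y < r x)
    (hy : 6 * votesBefore V y x ≤ Multiset.card V)
    (hbetween : ∀ z, r y < r z → r z < r x → 6 * votesBefore V x z ≤ Multiset.card V)
    (hbehind : ∀ w, r x < r w → 6 * votesBefore V w x ≤ Multiset.card V) {c : C}
    (hyc : r y < r c) (hcx : c ≠ x) :
    3 * (Multiset.card V : ℤ) ≤
      6 * (gain 3 V r (moveBehind r y x) {y, c} + gain 3 V r (moveBehind r y x) {y, x, c}) := by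
  have hxy : x ≠ y := ne_of_apply_ne r hyx.ne'
  have hcy : c ≠ y := ne_of_apply_ne r hyc.ne'
  have htop2 : topS r {y, c} = ↑y := by simp [topS_eq_coe_iff_before, hyc, Before]
  have htop3 : topS r {y, x, c} = ↑y := by simp [topS_eq_coe_iff_before, hyx, hyc, Before]
  have hk2 : ({y, c} : Finset C).card ≤ 3 := card_le_two.trans (by norm_num)
  rcases lt_or_gt_of_ne (r.injective.ne hcx) with hcx' | hxc
  · have htop2' : topS (moveBehind r y x) {y, c} = ↑c := by
      simp [topS_eq_coe_iff_before, moveBehind_before_self_iff hyx hcy, hcx'.le]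
    have htop3' : topS (moveBehind r y x) {y, x, c} = ↑c := by
      simp [topS_eq_coe_iff_before, (moveBehind_before_self_iff hyx hcy).mpr hcx'.le,
        (moveBehind_before_iff hyx hcy hxy).mpr hcx']
    have h2 := card_le_gain_add (k := 3) (V := V) (R := {y}) hk2 htop2 htop2' hcy.symm
      (by simp +contextual)
    have h3 := card_le_gain_add (k := 3) (V := V) (R := {y, x}) card_le_three htop3 htop3'
      hcy.symm (by simp +contextual)
    have hyc_le := votesBefore_le_add V y x c
    have hxc_le := hbetween c hyc hcx'
    rw [sum_singleton] at h2
    rw [sum_pair hxy.symm] at h3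
    omega
  · have h2 : gain 3 V r (moveBehind r y x) {y, c} = 0 := by
      refine gain_eq_zero_of_topS_eq (htop2 ▸ ?_)
      simp [topS_eq_coe_iff_before, moveBehind_self_before_iff hyx hcy, hxc]
    have htop3' : topS (moveBehind r y x) {y, x, c} = ↑x := by
      simp [topS_eq_coe_iff_before, (moveBehind_before_self_iff hyx hxy).mpr le_rfl,
        (moveBehind_before_iff hyx hxy hcy).mpr hxc]
    have h3 := card_le_gain_add (k := 3) (V := V) (R := {y, c}) card_le_three htop3 htop3'
      hxy.symm (by simp +contextual)
    have hcx_le := hbehind c hxc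
    rw [sum_pair hcy.symm] at h3
    omega

theorem neg_two_mul_card_le_gain (hyx : r y < r x)
    (hy : 6 * votesBefore V y x ≤ Multiset.card V)
    (hbetween : ∀ z, r y < r z → r z < r x → 6 * votesBefore V x z ≤ Multiset.card V)
    {S : Finset C} (hxS : x ∉ S) :
    -2 * (Multiset.card V : ℤ) ≤ 6 * gain 3 V r (moveBehind r y x) S := by
  by_cases hS : topS (moveBehind r y x) S = topS r S
  · rw [gain_eq_zero_of_topS_eq hS]
    omega
  by_cases hk : S.card ≤ 3
  · obtain ⟨htop, t, htop', hty, hyt, htx⟩ := exists_of_topS_moveBehind_ne hyx hS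
    have htS : t ∈ S := ((topS_eq_coe_iff _).mp htop').1
    have h1 := neg_votesBefore_le_gain (V := V) (π' := moveBehind r y x) hk htop htS hty.symm
    have h2 := votesBefore_le_add V y x t
    have h3 := hbetween t hyt (lt_of_le_of_ne htx (r.injective.ne (ne_of_mem_of_not_mem htS hxS)))
    omega
  · rw [gain_eq_zero_of_lt_card (not_le.mp hk)]
    omega

theorem mem_and_subset_of_gain_ne_zero (hyx : r y < r x) {S : Finset C}
    (h : gain 3 V r (moveBehind r y x) S ≠ 0) :
    y ∈ S ∧ S ⊆ insert y (insert x (behindExcept r y x)) := by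
  have hS : topS (moveBehind r y x) S ≠ topS r S := fun hS => h (gain_eq_zero_of_topS_eq hS)
  obtain ⟨hyS, hmin⟩ := (topS_eq_coe_iff_before r).mp (exists_of_topS_moveBehind_ne hyx hS).1
  refine ⟨hyS, fun c hc => ?_⟩
  rcases eq_or_ne c y with rfl | hcy
  · exact mem_insert_self c _
  · simp only [behindExcept, mem_insert, mem_filter, mem_univ, true_and]
    tauto

theorem gainWeight_le_gain (hyx : r y < r x)
    (hy : 6 * votesBefore V y x ≤ Multiset.card V)
    (hbetween : ∀ z, r y < r z → r z < r x → 6 * votesBefore V x z ≤ Multiset.card V)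
    (hbehind : ∀ w, r x < r w → 6 * votesBefore V w x ≤ Multiset.card V) {T : Finset C}
    (hT : T ⊆ behindExcept r y x) :
    (Multiset.card V : ℤ) * gainWeight T.card ≤ 6 * (gain 3 V r (moveBehind r y x) (insert y T)
      + gain 3 V r (moveBehind r y x) (insert y (insert x T))) := by
  have hxy : x ≠ y := ne_of_apply_ne r hyx.ne'
  have hmem : ∀ c ∈ T, r y < r c ∧ c ≠ x := fun c hc => by simpa [behindExcept] using hT hc
  have hyT : y ∉ T := fun h => lt_irrefl _ (hmem y h).1
  have hxT : x ∉ T := fun h => (hmem x h).2 rfl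
  have hcard₁ : (insert y T).card = T.card + 1 := card_insert_of_notMem hyT
  have hcard₂ : (insert y (insert x T)).card = T.card + 2 := by
    rw [card_insert_of_notMem (by simp [hxy.symm, hyT]), card_insert_of_notMem hxT]
  match h : T.card with
  | 0 =>
    obtain rfl := card_eq_zero.mp h
    have hy0 : gain 3 V r (moveBehind r y x) {y} = 0 :=
      gain_eq_zero_of_topS_eq (by rw [topS_singleton, topS_singleton])
    have := four_mul_card_le_gain_pair hyx hy
    simp only [gainWeight, insert_empty, hy0]
    linarith
  | 1 =>
    obtain ⟨c, rfl⟩ := card_eq_one.mp h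
    obtain ⟨hyc, hcx⟩ := hmem c (mem_singleton_self c)
    have := three_mul_card_le_gain_add_gain hyx hy hbetween hbehind hyc hcx
    simp only [gainWeight]
    linarith
  | 2 =>
    have := neg_two_mul_card_le_gain hyx hy hbetween (S := insert y T) (by simp [hxy, hxT])
    rw [gain_eq_zero_of_lt_card (by omega : 3 < (insert y (insert x T)).card)]
    simp only [gainWeight]
    linarith
  | m + 3 =>
    rw [gain_eq_zero_of_lt_card (by omega : 3 < (insert y T).card),
      gain_eq_zero_of_lt_card (by omega : 3 < (insert y (insert x T)).card)]
    simp [gainWeight]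

theorem kDistV_moveBehind_lt (hn : Fintype.card C ≤ 6) (hV : V ≠ 0) (hyx : r y < r x)
    (hy : 6 * votesBefore V y x ≤ Multiset.card V)
    (hbetween : ∀ z, r y < r z → r z < r x → 6 * votesBefore V x z ≤ Multiset.card V)
    (hbehind : ∀ w, r x < r w → 6 * votesBefore V w x ≤ Multiset.card V) :
    kDistV 3 (moveBehind r y x) V < kDistV 3 r V := by
  set E := behindExcept r y x
  have hxy : x ≠ y := ne_of_apply_ne r hyx.ne'
  have hxE : x ∉ E := by simp [E, behindExcept]
  have hyxE : y ∉ insert x E := by simp [E, behindExcept, hxy.symm]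
  have hgain : (kDistV 3 r V : ℤ) - kDistV 3 (moveBehind r y x) V = ∑ T ∈ E.powerset,
      (gain 3 V r (moveBehind r y x) (insert y T)
        + gain 3 V r (moveBehind r y x) (insert y (insert x T))) := by
    rw [kDistV_sub_kDistV_eq_sum_gain, sum_powerset_univ_eq_sum_insert hyxE
      fun S hS => mem_and_subset_of_gain_ne_zero hyx hS, sum_powerset_insert hxE,
      sum_add_distrib]
  have hE : E.card ≤ 4 := by
    have := card_le_card (subset_univ (insert y (insert x E)))
    rw [card_insert_of_notMem hyxE, card_insert_of_notMem hxE, card_univ] at this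
    omega
  have hweights : (Multiset.card V : ℤ) * ∑ T ∈ E.powerset, gainWeight T.card ≤
      6 * ((kDistV 3 r V : ℤ) - kDistV 3 (moveBehind r y x) V) := by
    rw [hgain, mul_sum, mul_sum]
    exact sum_le_sum fun T hT => gainWeight_le_gain hyx hy hbetween hbehind (mem_powerset.mp hT)
  have := mul_pos (Int.natCast_pos.mpr (Multiset.card_pos.mpr hV))
    (sum_powerset_gainWeight_pos E hE)
  omega

end Improvement

/-- $5/6$-majority rule for elections with at most 6 candidates. -/
theorem stmt18 {C : Type*} [Fintype C] [DecidableEq C]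
    (hn : Fintype.card C ≤ 6)
    (V : Multiset (Ranking C)) (hV : V ≠ 0)
    (x : C) (hx : NonDirty V (5 / 6) x)
    (r : Ranking C) (hr : IsKMedian 3 V r)
    (hzx : ∀ z : C, AtLeastRatio V (5 / 6) z x → Before r z x) :
    ∀ y : C, y ≠ x → AtLeastRatio V (5 / 6) x y → Before r x y := by
  intro y₀ hy₀x hxy₀
  by_contra hbefore
  obtain ⟨y, hy, hmax⟩ := (univ.filter fun c => c ≠ x ∧ AtLeastRatio V (5 / 6) x c ∧
    Before r c x).exists_max_image r
      ⟨y₀, by simpa [hy₀x, hxy₀] using (not_before_iff r hy₀x.symm).mp hbefore⟩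
  simp only [mem_filter, mem_univ, true_and] at hy hmax
  obtain ⟨hyx, hxy, hyr⟩ := hy
  have hbetween : ∀ z, r y < r z → r z < r x → 6 * votesBefore V x z ≤ Multiset.card V := by
    intro z hyz hzr
    have hzx' : z ≠ x := ne_of_apply_ne r hzr.ne
    rcases hx z hzx' with h | h
    · exact absurd (hmax z ⟨hzx', h, hzr⟩) (not_le.mpr hyz)
    · exact six_mul_votesBefore_le V hzx' h
  have hbehind : ∀ w, r x < r w → 6 * votesBefore V w x ≤ Multiset.card V := by
    intro w hxw
    have hwx : w ≠ x := ne_of_apply_ne r hxw.ne'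
    rcases hx w hwx with h | h
    · exact six_mul_votesBefore_le V hwx.symm h
    · exact absurd (hzx w h) (not_lt.mpr hxw.le)
  exact absurd (hr (moveBehind r y x)) (not_le.mpr (kDistV_moveBehind_lt hn hV hyr
    (six_mul_votesBefore_le V hyx.symm hxy) hbetween hbehind))
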